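/- The metric space (Ψ, d_M) is not totally bounded: the points p_j = (1/2, 3·2^{-j-1}) ∈ Ψ satisfy d_M(p_j, p_k) ≥ 1/2 for all j ≠ k. Consequently the completion of (Ψ, d_M) is not compact. -/

import Mathlib

noncomputable section
open Set Metric Filter Topology

abbrev E2 := EuclideanSpace ℝ (Fin 2)
abbrev E3 := EuclideanSpace ℝ (Fin 3)

/-- The point (a,b) in the Euclidean plane. -/
def pt (a b : ℝ) : E2 := (WithLp.equiv 2 (Fin 2 → ℝ)).symm ![a, b]
def pt3 (a b c : ℝ) : E3 := (WithLp.equiv 2 (Fin 3 → ℝ)).symm ![a, b, c]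

/-- The topologist's comb. -/
def Psi : Set E2 :=
  {x : E2 | x 0 ∈ Ioo (-1 : ℝ) 1 ∧ x 1 ∈ Ioo (0 : ℝ) 2} \
    ⋃ j : ℕ, {x : E2 | x 0 ∈ Icc (0 : ℝ) 1 ∧ x 1 = 2 ^ (-(j : ℤ))}

def theta (j : ℕ) : ℝ := 2 ^ (-(j : ℤ))
/-- For t ∈ (2^{-j}, 2^{1-j}), jIdx t = j. -/
def jIdx (t : ℝ) : ℕ := ⌈-Real.logb 2 t⌉₊

/-- The folding map into ℝ³ used to define the extended metric. -/
def F (x : E2) : E3 :=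
  if x 0 ≤ 0 then pt3 (x 0) (x 1) 0
  else pt3 (x 0 * Real.cos (theta (jIdx (x 1)))) (x 1) (x 0 * Real.sin (theta (jIdx (x 1))))

def distExt (x y : E2) : ℝ := dist (F x) (F y)

/-- The Mazurkiewicz distance on the comb. -/
def dM (x y : E2) : ℝ :=
  sInf {d : ℝ | ∃ E : Set E2, E ⊆ Psi ∧ IsConnected E ∧ x ∈ E ∧ y ∈ E ∧ d = Metric.diam E}

/-!
Between the heights of `p_j` and `p_k` (`j < k`) lies the tooth `[0,1] × {2^{-j}}`. A connected
`E ⊆ Ψ` containing both points meets the line at height `2^{-j}` by the intermediate value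
theorem, and in `Ψ` it can only do so to the left of the tooth, at negative first coordinate;
so `diam E > 1/2`. Since `Ψ` is connected (every point is joined horizontally to the open strip
`(-1,0) × (0,2)`), `d_M` is a finite pseudometric on `Ψ`, and a finite `1/4`-net would put two
of the `p_j` within `1/2` of each other.
-/

/-- `dM = mazurkiewiczDist Psi` by definition. When no connected subset of `S` contains both
points, the infimum is the junk value `0`. -/
def mazurkiewiczDist {X : Type*} [PseudoMetricSpace X] (S : Set X) (x y : X) : ℝ :=
  sInf {d : ℝ | ∃ E : Set X, E ⊆ S ∧ IsConnected E ∧ x ∈ E ∧ y ∈ E ∧ d = diam E}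

section MazurkiewiczDist

variable {X : Type*} [PseudoMetricSpace X] {S E : Set X} {x y z : X}

lemma mazurkiewiczDist_comm (S : Set X) (x y : X) :
    mazurkiewiczDist S x y = mazurkiewiczDist S y x := by
  simp only [mazurkiewiczDist, and_left_comm (a := x ∈ _)]

lemma mazurkiewiczDist_le_diam (hES : E ⊆ S) (hE : IsConnected E) (hx : x ∈ E) (hy : y ∈ E) :
    mazurkiewiczDist S x y ≤ diam E :=
  csInf_le ⟨0, by rintro _ ⟨E, -, -, -, -, rfl⟩; exact diam_nonneg⟩ ⟨E, hES, hE, hx, hy, rfl⟩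

lemma le_mazurkiewiczDist (hS : IsConnected S) (hx : x ∈ S) (hy : y ∈ S) {r : ℝ}
    (h : ∀ E ⊆ S, IsConnected E → x ∈ E → y ∈ E → r ≤ diam E) :
    r ≤ mazurkiewiczDist S x y :=
  le_csInf ⟨_, S, subset_rfl, hS, hx, hy, rfl⟩ <| by
    rintro _ ⟨E, hES, hE, hxE, hyE, rfl⟩
    exact h E hES hE hxE hyE

lemma exists_diam_lt_of_mazurkiewiczDist_lt (hS : IsConnected S) (hx : x ∈ S) (hy : y ∈ S)
    {ε : ℝ} (h : mazurkiewiczDist S x y < ε) :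
    ∃ E ⊆ S, IsConnected E ∧ x ∈ E ∧ y ∈ E ∧ diam E < ε := by
  by_contra! hE
  exact h.not_ge (le_mazurkiewiczDist hS hx hy hE)

lemma mazurkiewiczDist_triangle (hS : IsConnected S) (hx : x ∈ S) (hy : y ∈ S) (hz : z ∈ S) :
    mazurkiewiczDist S x z ≤ mazurkiewiczDist S x y + mazurkiewiczDist S y z := by
  refine le_of_forall_pos_lt_add fun ε hε ↦ ?_
  obtain ⟨E₁, hE₁S, hE₁, hxE₁, hyE₁, hd₁⟩ := exists_diam_lt_of_mazurkiewiczDist_lt hS hx hy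
    (lt_add_of_pos_right (mazurkiewiczDist S x y) (half_pos hε))
  obtain ⟨E₂, hE₂S, hE₂, hyE₂, hzE₂, hd₂⟩ := exists_diam_lt_of_mazurkiewiczDist_lt hS hy hz
    (lt_add_of_pos_right (mazurkiewiczDist S y z) (half_pos hε))
  calc mazurkiewiczDist S x z ≤ diam (E₁ ∪ E₂) :=
        mazurkiewiczDist_le_diam (union_subset hE₁S hE₂S) (hE₁.union ⟨y, hyE₁, hyE₂⟩ hE₂)
          (Or.inl hxE₁) (Or.inr hzE₂)
    _ ≤ diam E₁ + dist y y + diam E₂ := diam_union hyE₁ hyE₂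
    _ < _ := by rw [dist_self]; linarith

end MazurkiewiczDist

lemma not_exists_finite_net_of_separated {X : Type*} {S : Set X} {d : X → X → ℝ}
    (hcomm : ∀ x ∈ S, ∀ y ∈ S, d x y = d y x)
    (htri : ∀ x ∈ S, ∀ y ∈ S, ∀ z ∈ S, d x z ≤ d x y + d y z)
    {p : ℕ → X} (hpS : ∀ j, p j ∈ S) {r : ℝ} (hsep : ∀ j k, j ≠ k → r ≤ d (p j) (p k)) :
    ¬ ∃ T : Finset X, ↑T ⊆ S ∧ ∀ x ∈ S, ∃ s ∈ T, d x s < r / 2 := by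
  rintro ⟨T, hTS, hT⟩
  choose c hcT hc using fun j ↦ hT (p j) (hpS j)
  obtain ⟨j, -, k, -, hjk, hcjk⟩ := Finset.exists_ne_map_eq_of_card_lt_of_maps_to
    (s := Finset.range (T.card + 1)) (by simp) fun j _ ↦ hcT j
  have := htri _ (hpS j) _ (hTS (hcT j)) _ (hpS k)
  rw [hcjk, hcomm _ (hTS (hcT k)) _ (hpS k)] at this
  linarith [hsep j k hjk, hcjk ▸ hc j, hc k]

lemma mem_Psi_iff {x : E2} : x ∈ Psi ↔
    x 0 ∈ Ioo (-1) 1 ∧ x 1 ∈ Ioo 0 2 ∧ ∀ j : ℕ, 0 ≤ x 0 → x 1 ≠ theta j := by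
  simp only [Psi, theta, Set.mem_sdiff, mem_ofPred_eq, mem_iUnion, not_exists, mem_Icc, not_and]
  constructor
  · rintro ⟨⟨h0, h1⟩, h⟩
    exact ⟨h0, h1, fun j hx0 ↦ h j ⟨hx0, h0.2.le⟩⟩
  · rintro ⟨h0, h1, h⟩
    exact ⟨⟨h0, h1⟩, fun j hx0 ↦ h j hx0.1⟩

lemma Psi_isBounded : Bornology.IsBounded Psi := by
  refine isBounded_iff_forall_norm_le.2 ⟨3, fun x hx ↦ ?_⟩
  obtain ⟨⟨h0, h0'⟩, ⟨h1, h1'⟩, -⟩ := mem_Psi_iff.1 hx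
  have hx2 : ‖x‖ ^ 2 = x 0 ^ 2 + x 1 ^ 2 := by
    simp [EuclideanSpace.norm_sq_eq, Fin.sum_univ_two]
  nlinarith [norm_nonneg x]

lemma fst_neg_of_mem_Psi_of_snd_eq_theta {x : E2} (hx : x ∈ Psi) {j : ℕ} (h : x 1 = theta j) :
    x 0 < 0 :=
  not_le.1 fun hx0 ↦ (mem_Psi_iff.1 hx).2.2 j hx0 h

lemma mem_Psi_of_snd_eq {x y : E2} (hx : x ∈ Psi) (hy1 : y 1 = x 1) (hy0 : -1 < y 0)
    (hyx : y 0 ≤ x 0 ∨ y 0 < 0) : y ∈ Psi := by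
  obtain ⟨⟨-, hx0⟩, hx1, hteeth⟩ := mem_Psi_iff.1 hx
  refine mem_Psi_iff.2 ⟨⟨hy0, by rcases hyx with h | h <;> linarith⟩, hy1 ▸ hx1, fun j h0 ↦ ?_⟩
  rw [hy1]
  exact hteeth j (by rcases hyx with h | h <;> linarith)

def leftStrip : Set E2 := {x | x 0 ∈ Ioo (-1) 0 ∧ x 1 ∈ Ioo 0 2}

lemma convex_leftStrip : Convex ℝ leftStrip :=
  ((convex_Ioo _ _).linear_preimage (EuclideanSpace.proj 0 : E2 →L[ℝ] ℝ).toLinearMap).inter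
    ((convex_Ioo _ _).linear_preimage (EuclideanSpace.proj 1 : E2 →L[ℝ] ℝ).toLinearMap)

lemma leftStrip_subset_Psi : leftStrip ⊆ Psi :=
  fun _ ⟨h0, h1⟩ ↦ mem_Psi_iff.2 ⟨⟨h0.1, h0.2.trans one_pos⟩, h1, fun _ h ↦ (h.not_gt h0.2).elim⟩

lemma segment_subset_Psi {x : E2} (hx : x ∈ Psi) : segment ℝ x (pt (-1/2) (x 1)) ⊆ Psi := by
  rintro _ ⟨a, b, ha, hb, hab, rfl⟩
  have h0 : (a • x + b • pt (-1/2) (x 1)) 0 = a * x 0 + b * (-1/2) := rfl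
  have h1 : (a • x + b • pt (-1/2) (x 1)) 1 = a * x 1 + b * x 1 := rfl
  have hx0 := (mem_Psi_iff.1 hx).1.1
  refine mem_Psi_of_snd_eq hx (by rw [h1, ← add_mul, hab, one_mul]) ?_ ?_ <;> rw [h0]
  · nlinarith [mul_nonneg ha (by linarith : 0 ≤ x 0 + 1)]
  · rcases le_or_gt (-1/2) (x 0) with h | h
    · left; nlinarith
    · right; nlinarith

lemma Psi_isConnected : IsConnected Psi := by
  have hbase : pt (-1/2) 1 ∈ leftStrip :=
    ⟨⟨by norm_num [pt], by norm_num [pt]⟩, ⟨by norm_num [pt], by norm_num [pt]⟩⟩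
  refine ⟨⟨_, leftStrip_subset_Psi hbase⟩, isPreconnected_of_forall (pt (-1/2) 1) fun x hx ↦ ?_⟩
  have hfoot : pt (-1/2) (x 1) ∈ leftStrip :=
    ⟨⟨by norm_num [pt], by norm_num [pt]⟩, (mem_Psi_iff.1 hx).2.1⟩
  refine ⟨_, union_subset (segment_subset_Psi hx) leftStrip_subset_Psi, Or.inr hbase,
    Or.inl (left_mem_segment ℝ _ _), ?_⟩
  exact (convex_segment _ _).isPreconnected.union _ (right_mem_segment ℝ _ _) hfoot
    (convex_leftStrip.isPreconnected)

lemma two_mul_theta (j : ℕ) : 2 * theta j = 2 ^ (-(j : ℤ) + 1) := by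
  rw [theta, zpow_add_one₀ two_ne_zero, mul_comm]

lemma theta_notMem_Ioo (i j : ℕ) : theta i ∉ Ioo (theta j) (2 * theta j) := by
  rw [two_mul_theta, theta, theta]
  rintro ⟨hlo, hhi⟩
  rw [zpow_lt_zpow_iff_right₀ one_lt_two] at hlo hhi
  omega

lemma two_mul_theta_le_theta {j k : ℕ} (h : j < k) : 2 * theta k ≤ theta j := by
  rw [two_mul_theta, theta]
  exact zpow_le_zpow_right₀ one_le_two (by omega)

def gapPoint (j : ℕ) : E2 := pt (1/2) (3 * 2 ^ (-(j:ℤ) - 1))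

lemma gapPoint_fst (j : ℕ) : gapPoint j 0 = 1/2 := rfl

lemma gapPoint_snd_mem_Ioo (j : ℕ) : gapPoint j 1 ∈ Ioo (theta j) (2 * theta j) := by
  have h : theta j = 2 * 2 ^ (-(j:ℤ) - 1) := by
    rw [theta, ← zpow_one_add₀ two_ne_zero]; ring_nf
  have hpos : (0:ℝ) < 2 ^ (-(j:ℤ) - 1) := by positivity
  change 3 * 2 ^ (-(j:ℤ) - 1) ∈ _
  constructor <;> linarith

lemma gapPoint_mem_Psi (j : ℕ) : gapPoint j ∈ Psi := by
  obtain ⟨hlo, hhi⟩ := gapPoint_snd_mem_Ioo j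
  have htheta : theta j ≤ 1 := zpow_le_one_of_nonpos₀ one_le_two (by omega)
  have htheta0 : 0 < theta j := by unfold theta; positivity
  refine mem_Psi_iff.2 ⟨by norm_num [gapPoint_fst], ⟨by linarith, by linarith⟩, fun i _ h ↦ ?_⟩
  exact theta_notMem_Ioo i j (h ▸ ⟨hlo, hhi⟩)

/-- `E` meets the height of the tooth, which inside `Psi` happens only left of the teeth. -/
lemma fst_lt_diam_of_crosses_tooth {E : Set E2} (hE : E ⊆ Psi) (hc : IsPreconnected E)
    {p q : E2} (hp : p ∈ E) (hq : q ∈ E) {i : ℕ} (hi : theta i ∈ Icc (q 1) (p 1)) :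
    p 0 < diam E := by
  obtain ⟨z, hzE, hz⟩ := hc.intermediate_value hq hp (PiLp.continuous_apply 2 _ 1).continuousOn hi
  have hz0 : z 0 < 0 := fst_neg_of_mem_Psi_of_snd_eq_theta (hE hzE) hz
  calc p 0 < |p 0 - z 0| := (by linarith : p 0 < p 0 - z 0).trans_le (le_abs_self _)
    _ ≤ dist p z := PiLp.dist_apply_le p z 0
    _ ≤ diam E := dist_le_diam_of_mem (Psi_isBounded.subset hE) hp hzE

lemma half_lt_diam_of_gapPoint_mem {E : Set E2} (hE : E ⊆ Psi) (hc : IsPreconnected E)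
    {j k : ℕ} (hjk : j ≠ k) (hj : gapPoint j ∈ E) (hk : gapPoint k ∈ E) : 1/2 < diam E := by
  wlog h : j < k generalizing j k
  · exact this hjk.symm hk hj (by omega)
  have hcross : theta j ∈ Icc (gapPoint k 1) (gapPoint j 1) :=
    ⟨((gapPoint_snd_mem_Ioo k).2.trans_le (two_mul_theta_le_theta h)).le,
      (gapPoint_snd_mem_Ioo j).1.le⟩
  simpa only [gapPoint_fst] using fst_lt_diam_of_crosses_tooth hE hc hj hk hcross

lemma half_le_dM_gapPoint {j k : ℕ} (hjk : j ≠ k) : 1/2 ≤ dM (gapPoint j) (gapPoint k) :=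
  le_mazurkiewiczDist Psi_isConnected (gapPoint_mem_Psi j) (gapPoint_mem_Psi k)
    fun _ hE hc hj hk ↦ (half_lt_diam_of_gapPoint_mem hE hc.isPreconnected hjk hj hk).le

theorem dM_not_totallyBounded :
    (∀ j : ℕ, pt (1/2) (3 * 2 ^ (-(j:ℤ) - 1)) ∈ Psi) ∧
    (∀ j k : ℕ, j ≠ k →
        (1:ℝ)/2 ≤ dM (pt (1/2) (3 * 2 ^ (-(j:ℤ) - 1))) (pt (1/2) (3 * 2 ^ (-(k:ℤ) - 1)))) ∧
    ¬ (∀ ε > (0:ℝ), ∃ S : Finset E2, ↑S ⊆ Psi ∧ ∀ x ∈ Psi, ∃ s ∈ S, dM x s < ε) := by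
  refine ⟨gapPoint_mem_Psi, fun _ _ ↦ half_le_dM_gapPoint, fun hnet ↦ ?_⟩
  refine not_exists_finite_net_of_separated (d := dM) (fun x _ y _ ↦ mazurkiewiczDist_comm Psi x y)
    (fun _ hx _ hy _ hz ↦ mazurkiewiczDist_triangle Psi_isConnected hx hy hz) gapPoint_mem_Psi
    (fun _ _ ↦ half_le_dM_gapPoint) ?_
  norm_num only
  exact hnet (1/4) (by norm_num)
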